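/- For any consistently oriented connectivity complex Δ with vertex set V = {1,…,N_V}, the set of admissible oriented meshes M⁺_Δ is an open (possibly empty) subset of ℝ^{2×N_V}. -/

import Mathlib

open scoped RealInnerProductSpace
open scoped Classical

noncomputable section

/-- Points in the plane `ℝ²`. -/
abbrev Pt : Type := EuclideanSpace ℝ (Fin 2)

/-- The determinant of the 2×2 matrix with columns `v` and `w`. -/
def det2 (v w : Pt) : ℝ := v 0 * w 1 - v 1 * w 0

/-- A connectivity complex on the vertex set `Fin N`: a pure, 2-path connected
abstract simplicial 2-complex. -/
structure ConnectivityComplex (N : ℕ) where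
  faces : Finset (Finset (Fin N))
  faces_nonempty : faces.Nonempty
  mem_nonempty : ∀ σ ∈ faces, σ.Nonempty
  card_le_three : ∀ σ ∈ faces, σ.card ≤ 3
  down_closed : ∀ σ ∈ faces, ∀ τ : Finset (Fin N), τ ⊆ σ → τ.Nonempty → τ ∈ faces
  pure : ∀ σ ∈ faces, ∃ τ ∈ faces, τ.card = 3 ∧ σ ⊆ τ
  two_path_connected : ∀ σ ∈ faces, ∀ τ ∈ faces, σ.card = 3 → τ.card = 3 → σ ≠ τ →
    ∃ (m : ℕ) (c : Fin (m + 1) → Finset (Fin N)),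
      c 0 = σ ∧ c (Fin.last m) = τ ∧
      (∀ i, c i ∈ faces ∧ (c i).card = 3) ∧
      (∀ i : Fin m, (c i.castSucc ∩ c i.succ).card = 2)

namespace PlanarMesh

variable {N : ℕ}

/-- The geometric realization `Σ_Δ(Q)`: the collection of the convex hulls of the
vertex positions of all faces of `Δ`. -/
def SigmaSet (Δ : ConnectivityComplex N) (Q : Fin N → Pt) : Set (Set Pt) :=
  { s | ∃ σ ∈ Δ.faces, s = convexHull ℝ (Q '' (σ : Set (Fin N))) }

/-- `Q` is an admissible assignment of vertex positions for `Δ`: `Σ_Δ(Q)` is a geometric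
simplicial complex in `ℝ²` whose associated abstract simplicial complex is exactly `Δ`. -/
def IsAdmissible (Δ : ConnectivityComplex N) (Q : Fin N → Pt) : Prop :=
  -- each member of `Σ_Δ(Q)` is a simplex, i.e. the convex hull of affinely independent points
  (∀ σ ∈ Δ.faces, AffineIndependent ℝ fun i : σ => Q i.1) ∧
  -- every face of a member of `Σ_Δ(Q)` belongs to `Σ_Δ(Q)`
  (∀ σ ∈ Δ.faces, ∀ ρ : Finset (Fin N), ρ ⊆ σ → ρ.Nonempty →
      convexHull ℝ (Q '' (ρ : Set (Fin N))) ∈ SigmaSet Δ Q) ∧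
  -- the nonempty intersection of any two members is a common face of both
  (∀ σ ∈ Δ.faces, ∀ τ ∈ Δ.faces,
      (convexHull ℝ (Q '' (σ : Set (Fin N))) ∩ convexHull ℝ (Q '' (τ : Set (Fin N)))).Nonempty →
      ∃ ρ : Finset (Fin N), ρ.Nonempty ∧ ρ ⊆ σ ∧ ρ ⊆ τ ∧
        convexHull ℝ (Q '' (σ : Set (Fin N))) ∩ convexHull ℝ (Q '' (τ : Set (Fin N)))
          = convexHull ℝ (Q '' (ρ : Set (Fin N)))) ∧
  -- the abstract simplicial complex associated with `Σ_Δ(Q)` is exactly `Δ`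
  (∀ σ : Finset (Fin N), σ.Nonempty →
      convexHull ℝ (Q '' (σ : Set (Fin N))) ∈ SigmaSet Δ Q → σ ∈ Δ.faces)

/-- The set `M⁰_Δ` of admissible meshes with connectivity `Δ`. -/
def M0 (Δ : ConnectivityComplex N) : Set (Fin N → Pt) := { Q | IsAdmissible Δ Q }

/-- The (oriented) edges induced by an oriented triangle `[o 0, o 1, o 2]`. -/
def inducedEdges (o : Fin 3 → Fin N) : Finset (Fin N × Fin N) :=
  {(o 1, o 2), (o 2, o 0), (o 0, o 1)}

/-- A consistently oriented connectivity complex: each 2-face carries an orientation,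
and two 2-faces sharing a 1-face induce opposite orientations on that 1-face. -/
structure OrientedComplex (N : ℕ) extends ConnectivityComplex N where
  orient : Finset (Fin N) → (Fin 3 → Fin N)
  orient_spec : ∀ σ ∈ faces, σ.card = 3 → Finset.image (orient σ) Finset.univ = σ
  consistent : ∀ σ ∈ faces, ∀ τ ∈ faces, σ.card = 3 → τ.card = 3 → σ ≠ τ →
    (σ ∩ τ).card = 2 → ∀ a b : Fin N, a ∈ σ ∩ τ → b ∈ σ ∩ τ → a ≠ b →
      ((a, b) ∈ inducedEdges (orient σ) ↔ (b, a) ∈ inducedEdges (orient τ))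

variable (Δ : OrientedComplex N)

/-- The signed area `A_Q[i₀,i₁,i₂]` of an oriented triangle. -/
def signedArea (Q : Fin N → Pt) (o : Fin 3 → Fin N) : ℝ :=
  det2 (Q (o 1) - Q (o 0)) (Q (o 2) - Q (o 1)) / 2

/-- The set `M⁺_Δ` of admissible oriented meshes. -/
def Mplus : Set (Fin N → Pt) :=
  { Q | Q ∈ M0 Δ.toConnectivityComplex ∧
      ∀ σ ∈ Δ.faces, σ.card = 3 → 0 < signedArea Q (Δ.orient σ) }

/-- The manifold of planar triangular meshes `M_Δ(Q_ref)`: all `Q ∈ M⁺_Δ` which can be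
joined to `Q_ref` by a continuous path inside `M⁺_Δ`. -/
def Mmesh (Qref : Fin N → Pt) : Set (Fin N → Pt) :=
  { Q | JoinedIn (Mplus Δ) Qref Q }

/-- The length of the `ℓ`-th edge (the one opposite the `ℓ`-th vertex). -/
def edgeLen (Q : Fin N → Pt) (o : Fin 3 → Fin N) (ℓ : Fin 3) : ℝ :=
  ‖Q (o (ℓ + 1)) - Q (o (ℓ + 2))‖

/-- The `ℓ`-th height (the one through the `ℓ`-th vertex). -/
def height (Q : Fin N → Pt) (o : Fin 3 → Fin N) (ℓ : Fin 3) : ℝ :=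
  2 * signedArea Q o / edgeLen Q o ℓ

/-- The 2-faces of `Δ`. -/
def twoFaces : Finset (Finset (Fin N)) := Δ.faces.filter fun σ => σ.card = 3

/-- The boundary 1-faces `E_∂`: those contained in exactly one 2-face. -/
def boundaryEdges : Finset (Finset (Fin N)) :=
  Δ.faces.filter fun e =>
    e.card = 2 ∧ (Δ.faces.filter fun σ => σ.card = 3 ∧ e ⊆ σ).card = 1

/-- An interior 1-face: one contained in exactly two 2-faces. -/
def IsInteriorEdge (e : Finset (Fin N)) : Prop :=
  e ∈ Δ.faces ∧ e.card = 2 ∧ (Δ.faces.filter fun σ => σ.card = 3 ∧ e ⊆ σ).card = 2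

/-- The boundary vertices `V_∂`: those contained in some boundary 1-face. -/
def boundaryVertices : Finset (Fin N) :=
  Finset.univ.filter fun i => ∃ e ∈ boundaryEdges Δ, i ∈ e

/-- The 1-norm of `w` in a rotated coordinate system whose first axis is the unit vector `u`. -/
def rot1norm (u w : Pt) : ℝ := |w 0 * u 0 + w 1 * u 1| + |w 1 * u 0 - w 0 * u 1|

/-- The unit direction from `a` to `b`. -/
def unitDir (a b : Pt) : Pt := ‖b - a‖⁻¹ • (b - a)

/-- The distance `D_Q(i, [j₀, j₁])` of vertex `i` from the edge `[j₀, j₁]`, measured in the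
1-norm of a rotated coordinate system with one axis parallel to `Q j₁ - Q j₀`. -/
def Dpair (Q : Fin N → Pt) (i j0 j1 : Fin N) : ℝ :=
  sInf ((fun x => rot1norm (unitDir (Q j0) (Q j1)) (Q i - x)) '' segment ℝ (Q j0) (Q j1))

/-- The distance `D_Q(i, e)` for an (unordered) 1-face `e`. -/
def Dedge (Q : Fin N → Pt) (i : Fin N) (e : Finset (Fin N)) : ℝ :=
  sInf { r | ∃ j0 ∈ e, ∃ j1 ∈ e, j0 ≠ j1 ∧ r = Dpair Q i j0 j1 }

/-- The squared Frobenius norm of `Q - R`. -/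
def frobSq (Q R : Fin N → Pt) : ℝ := ∑ i, ‖Q i - R i‖ ^ 2

/-- The Frobenius norm of `Q`. -/
def frobNorm (Q : Fin N → Pt) : ℝ := Real.sqrt (∑ i, ‖Q i‖ ^ 2)

/-- The augmentation function `f`. -/
def ffun (Qref : Fin N → Pt) (β1 β2 β3 : ℝ) (Q : Fin N → Pt) : ℝ :=
  (∑ σ ∈ twoFaces Δ, ∑ ℓ : Fin 3, β1 / height Q (Δ.orient σ) ℓ)
  + (∑ e ∈ boundaryEdges Δ,
      ∑ i ∈ (boundaryVertices Δ).filter (fun i => i ∉ e), β2 / Dedge Q i e)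
  + β3 / 2 * frobSq Q Qref

/-- The semiperimeter of a triangle. -/
def semiPerimeter (Q : Fin N → Pt) (o : Fin 3 → Fin N) : ℝ :=
  (edgeLen Q o 0 + edgeLen Q o 1 + edgeLen Q o 2) / 2

/-- The inradius of a triangle: area divided by semiperimeter. -/
def inradius (Q : Fin N → Pt) (o : Fin 3 → Fin N) : ℝ :=
  signedArea Q o / semiPerimeter Q o

/-- The circumradius of a triangle. -/
def circumradius (Q : Fin N → Pt) (o : Fin 3 → Fin N) : ℝ :=
  edgeLen Q o 0 * edgeLen Q o 1 * edgeLen Q o 2 / (4 * signedArea Q o)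

/-- The interior angle of the triangle at the vertex `o ℓ`. -/
def interiorAngle (Q : Fin N → Pt) (o : Fin 3 → Fin N) (ℓ : Fin 3) : ℝ :=
  InnerProductGeometry.angle (Q (o (ℓ + 1)) - Q (o ℓ)) (Q (o (ℓ + 2)) - Q (o ℓ))


section Aux


lemma mem_hull_finset_iff {ι : Type*} (f : ι → Pt) (σ : Finset ι) (x : Pt) :
    x ∈ convexHull ℝ (f '' ↑σ) ↔
      ∃ w : ι → ℝ, (∀ i ∈ σ, 0 ≤ w i) ∧ ∑ i ∈ σ, w i = 1 ∧ ∑ i ∈ σ, w i • f i = x := by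
  constructor
  · intro hx
    have hsub : convexHull ℝ (f '' ↑σ) ⊆
        {x : Pt | ∃ w : ι → ℝ, (∀ i ∈ σ, 0 ≤ w i) ∧ ∑ i ∈ σ, w i = 1 ∧ ∑ i ∈ σ, w i • f i = x} := by
      apply convexHull_min
      · rintro _ ⟨i, hi, rfl⟩
        have hi' : i ∈ σ := hi
        refine ⟨fun j => if j = i then 1 else 0, ?_, ?_, ?_⟩
        · intro j _; dsimp only; split <;> norm_num
        · simp [Finset.sum_ite_eq' σ i (fun _ => (1:ℝ)), hi']
        · simp only [ite_smul, one_smul, zero_smul]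
          simp [Finset.sum_ite_eq' σ i (fun _ => f i), hi']
      · rintro x ⟨wx, hwx0, hwx1, hwxc⟩ y ⟨wy, hwy0, hwy1, hwyc⟩ a b ha hb hab
        refine ⟨fun i => a * wx i + b * wy i, ?_, ?_, ?_⟩
        · intro i hi; dsimp only
          have := hwx0 i hi; have := hwy0 i hi; positivity
        · dsimp only
          rw [Finset.sum_add_distrib, ← Finset.mul_sum, ← Finset.mul_sum, hwx1, hwy1]; linarith
        · dsimp only
          simp only [add_smul, mul_smul, Finset.sum_add_distrib, ← Finset.smul_sum, hwxc, hwyc]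
    exact hsub hx
  · rintro ⟨w, h0, h1, rfl⟩
    have := σ.centerMass_mem_convexHull (w := w) (z := f) h0 (by rw [h1]; norm_num)
      (fun i hi => Set.mem_image_of_mem f hi)
    rwa [Finset.centerMass, h1, inv_one, one_smul] at this

lemma mem_hull3_iff {A B C x : Pt} :
    x ∈ convexHull ℝ ({A, B, C} : Set Pt) ↔
      ∃ α β γ : ℝ, 0 ≤ α ∧ 0 ≤ β ∧ 0 ≤ γ ∧ α + β + γ = 1 ∧ α • A + β • B + γ • C = x := by
  have himg : (![A,B,C]) '' ↑(Finset.univ : Finset (Fin 3)) = {A, B, C} := by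
    simp [Set.image_univ]
    ext y; simp [Matrix.range_cons, Matrix.range_empty]; tauto
  rw [← himg, mem_hull_finset_iff]
  constructor
  · rintro ⟨w, h0, h1, hc⟩
    exact ⟨w 0, w 1, w 2, h0 0 (by simp), h0 1 (by simp), h0 2 (by simp),
      by simpa [Fin.sum_univ_three] using h1, by simpa [Fin.sum_univ_three] using hc⟩
  · rintro ⟨α, β, γ, h0, h1, h2, hs, hc⟩
    exact ⟨![α, β, γ], by intro i _; fin_cases i <;> simpa,
      by simpa [Fin.sum_univ_three] using hs, by simpa [Fin.sum_univ_three] using hc⟩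

lemma mem_hull2_iff {A B x : Pt} :
    x ∈ convexHull ℝ ({A, B} : Set Pt) ↔
      ∃ α β : ℝ, 0 ≤ α ∧ 0 ≤ β ∧ α + β = 1 ∧ α • A + β • B = x := by
  have himg : (![A,B]) '' ↑(Finset.univ : Finset (Fin 2)) = {A, B} := by
    simp [Set.image_univ]
    ext y; simp [Matrix.range_cons, Matrix.range_empty]; tauto
  rw [← himg, mem_hull_finset_iff]
  constructor
  · rintro ⟨w, h0, h1, hc⟩
    exact ⟨w 0, w 1, h0 0 (by simp), h0 1 (by simp),
      by simpa [Fin.sum_univ_two] using h1, by simpa [Fin.sum_univ_two] using hc⟩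
  · rintro ⟨α, β, h0, h1, hs, hc⟩
    exact ⟨![α, β], by intro i _; fin_cases i <;> simpa,
      by simpa [Fin.sum_univ_two] using hs, by simpa [Fin.sum_univ_two] using hc⟩

lemma coord_eq {y z : Pt} (h : y = z) (j : Fin 2) : y j = z j := by rw [h]

lemma vertex_alg {dAB dCD dAC dAD dCB dBD α β γ δ : ℝ}
    (hα : 0 ≤ α) (hβ : 0 ≤ β) (hγ : 0 ≤ γ) (hδ : 0 ≤ δ)
    (h12 : 0 < dAB) (h34 : 0 < dCD)
    (H1 : 0 < dAC ∨ dAD < 0) (H3 : dAC < 0 ∨ dCB < 0)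
    (Eq1 : γ * dAC + δ * dAD = β * dAB)
    (Eq2 : -(α * dAC) + β * dCB = δ * dCD)
    (Eq3 : α * dAD + β * dBD = γ * dCD)
    (Eq4 : γ * dCB - δ * dBD = α * dAB) :
    α = 0 ∧ β = 0 := by
  rcases le_or_gt 0 dAC with hA | hA
  · have hcb : dCB < 0 := by rcases H3 with h | h <;> linarith
    have hβ0 : β = 0 := by
      by_contra hne
      have hβpos : 0 < β := lt_of_le_of_ne hβ (Ne.symm hne)
      nlinarith [mul_nonneg hα hA, mul_nonneg hδ h34.le]
    subst hβ0
    have hz : α * dAC = 0 := by nlinarith [mul_nonneg hδ h34.le, mul_nonneg hα hA]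
    have hδ0 : δ = 0 := by nlinarith [mul_nonneg hδ h34.le, mul_nonneg hα hA]
    subst hδ0
    refine ⟨?_, rfl⟩
    by_contra hne
    have hαpos : 0 < α := lt_of_le_of_ne hα (Ne.symm hne)
    have hdac0 : dAC = 0 := by
      rcases mul_eq_zero.mp hz with h | h
      · exact absurd h (ne_of_gt hαpos)
      · exact h
    have had : dAD < 0 := by
      rcases H1 with h | h
      · rw [hdac0] at h; linarith
      · exact h
    nlinarith [mul_nonneg hγ h34.le]
  · have had : dAD < 0 := by rcases H1 with h | h <;> linarith
    have h1 : γ * dAC ≤ 0 := mul_nonpos_of_nonneg_of_nonpos hγ hA.le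
    have h2 : δ * dAD ≤ 0 := mul_nonpos_of_nonneg_of_nonpos hδ had.le
    have h3 : 0 ≤ β * dAB := mul_nonneg hβ h12.le
    have hβ0 : β = 0 := by nlinarith
    have hγ0 : γ = 0 := by
      by_contra hne; have : 0 < γ := lt_of_le_of_ne hγ (Ne.symm hne); nlinarith
    have hδ0 : δ = 0 := by
      by_contra hne; have : 0 < δ := lt_of_le_of_ne hδ (Ne.symm hne); nlinarith
    subst hβ0; subst hγ0; subst hδ0
    refine ⟨?_, rfl⟩
    by_contra hne
    have : 0 < α := lt_of_le_of_ne hα (Ne.symm hne)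
    nlinarith


lemma affineIndependent_of_det2 {p : Fin 3 → Pt} (h : det2 (p 1 - p 0) (p 2 - p 0) ≠ 0) :
    AffineIndependent ℝ p := by
  rw [affineIndependent_iff]
  intro s w hsum hcomb e he
  classical
  set W : Fin 3 → ℝ := fun i => if i ∈ s then w i else 0 with hW
  have hWsum : W 0 + W 1 + W 2 = 0 := by
    have h1 : ∑ i, W i = ∑ i ∈ s, w i := by
      rw [hW, Finset.sum_ite_mem, Finset.univ_inter]
    rw [Fin.sum_univ_three] at h1; rw [h1, hsum]
  have hWcomb : W 0 • p 0 + W 1 • p 1 + W 2 • p 2 = 0 := by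
    have h1 : ∑ i, W i • p i = ∑ i ∈ s, w i • p i := by
      rw [hW]
      simp only [ite_smul, zero_smul]
      rw [Finset.sum_ite_mem, Finset.univ_inter]
    rw [Fin.sum_univ_three] at h1; rw [h1, hcomb]
  have hc0 := coord_eq hWcomb 0
  have hc1 := coord_eq hWcomb 1
  simp only [PiLp.add_apply, PiLp.smul_apply, smul_eq_mul, PiLp.zero_apply] at hc0 hc1
  simp only [det2, PiLp.sub_apply] at h
  have hW1 : W 1 = 0 := by
    have key : W 1 * ((p 1 0 - p 0 0) * (p 2 1 - p 0 1) - (p 1 1 - p 0 1) * (p 2 0 - p 0 0)) = 0 := by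
      linear_combination (p 2 1 - p 0 1) * hc0 - (p 2 0 - p 0 0) * hc1
        - (p 0 0 * (p 2 1 - p 0 1) - p 0 1 * (p 2 0 - p 0 0)) * hWsum
    rcases mul_eq_zero.mp key with h' | h'
    · exact h'
    · exact absurd h' h
  have hW2 : W 2 = 0 := by
    have key : W 2 * ((p 1 0 - p 0 0) * (p 2 1 - p 0 1) - (p 1 1 - p 0 1) * (p 2 0 - p 0 0)) = 0 := by
      linear_combination (p 1 0 - p 0 0) * hc1 - (p 1 1 - p 0 1) * hc0
        + (p 0 0 * p 1 1 - p 0 1 * p 1 0) * hWsum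
    rcases mul_eq_zero.mp key with h' | h'
    · exact h'
    · exact absurd h' h
  have hWe : W e = w e := by rw [hW]; simp [he]
  have hW0 : W 0 = 0 := by linarith
  fin_cases e
  · rw [← hWe]; exact hW0
  · rw [← hWe]; exact hW1
  · rw [← hWe]; exact hW2

lemma edge_core {A B C D x : Pt}
    (hC : 0 < det2 (B - A) (C - A)) (hD : det2 (B - A) (D - A) < 0)
    (h1 : x ∈ convexHull ℝ ({A, B, C} : Set Pt)) (h2 : x ∈ convexHull ℝ ({A, B, D} : Set Pt)) :
    x ∈ convexHull ℝ ({A, B} : Set Pt) := by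
  obtain ⟨α, β, γ, hα, hβ, hγ, hs, hc⟩ := mem_hull3_iff.mp h1
  obtain ⟨α', β', δ, hα', hβ', hδ, hs', hc'⟩ := mem_hull3_iff.mp h2
  have hα2 : α = 1 - β - γ := by linarith
  have hα2' : α' = 1 - β' - δ := by linarith
  subst hα2 hα2'
  have h10 := coord_eq hc 0
  have h11 := coord_eq hc 1
  have h20 := coord_eq hc' 0
  have h21 := coord_eq hc' 1
  simp only [PiLp.add_apply, PiLp.smul_apply, smul_eq_mul] at h10 h11 h20 h21
  have hL1 : γ * det2 (B - A) (C - A) = δ * det2 (B - A) (D - A) := by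
    simp only [det2, PiLp.sub_apply]
    linear_combination (B 0 - A 0) * h11 - (B 1 - A 1) * h10
      - (B 0 - A 0) * h21 + (B 1 - A 1) * h20
  have hγC : γ * det2 (B - A) (C - A) = 0 := by
    have hge : 0 ≤ γ * det2 (B - A) (C - A) := mul_nonneg hγ hC.le
    have hle : δ * det2 (B - A) (D - A) ≤ 0 := mul_nonpos_of_nonneg_of_nonpos hδ hD.le
    linarith [hL1]
  have hγ0 : γ = 0 := by
    rcases mul_eq_zero.mp hγC with h' | h'
    · exact h'
    · exact absurd h' (ne_of_gt hC)
  subst hγ0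
  refine mem_hull2_iff.mpr ⟨1 - β, β, by linarith, hβ, by ring, ?_⟩
  rw [← hc]; module

lemma vertex_core {P A B C D x : Pt}
    (h12 : 0 < det2 (A - P) (B - P)) (h34 : 0 < det2 (C - P) (D - P))
    (H1 : 0 < det2 (A - P) (C - P) ∨ det2 (A - P) (D - P) < 0)
    (H3 : det2 (A - P) (C - P) < 0 ∨ det2 (C - P) (B - P) < 0)
    (hx1 : x ∈ convexHull ℝ ({P, A, B} : Set Pt))
    (hx2 : x ∈ convexHull ℝ ({P, C, D} : Set Pt)) :
    x = P := by
  obtain ⟨w0, α, β, hw0, hα, hβ, hsum, hc⟩ := mem_hull3_iff.mp hx1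
  obtain ⟨v0, γ, δ, hv0, hγ, hδ, hsum', hc'⟩ := mem_hull3_iff.mp hx2
  have hw0' : w0 = 1 - α - β := by linarith
  have hv0' : v0 = 1 - γ - δ := by linarith
  subst hw0' hv0'
  have h10 := coord_eq hc 0
  have h11 := coord_eq hc 1
  have h20 := coord_eq hc' 0
  have h21 := coord_eq hc' 1
  simp only [PiLp.add_apply, PiLp.smul_apply, smul_eq_mul] at h10 h11 h20 h21
  have Eq1 : γ * det2 (A - P) (C - P) + δ * det2 (A - P) (D - P) = β * det2 (A - P) (B - P) := by
    simp only [det2, PiLp.sub_apply]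
    linear_combination (A 0 - P 0) * h21 - (A 1 - P 1) * h20 - (A 0 - P 0) * h11 + (A 1 - P 1) * h10
  have Eq2 : -(α * det2 (A - P) (C - P)) + β * det2 (C - P) (B - P) = δ * det2 (C - P) (D - P) := by
    simp only [det2, PiLp.sub_apply]
    linear_combination (C 0 - P 0) * h11 - (C 1 - P 1) * h10 - (C 0 - P 0) * h21 + (C 1 - P 1) * h20
  have Eq3 : α * det2 (A - P) (D - P) + β * det2 (B - P) (D - P) = γ * det2 (C - P) (D - P) := by
    simp only [det2, PiLp.sub_apply]
    linear_combination (D 1 - P 1) * h10 - (D 0 - P 0) * h11 - (D 1 - P 1) * h20 + (D 0 - P 0) * h21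
  have Eq4 : γ * det2 (C - P) (B - P) - δ * det2 (B - P) (D - P) = α * det2 (A - P) (B - P) := by
    simp only [det2, PiLp.sub_apply]
    linear_combination (B 1 - P 1) * h20 - (B 0 - P 0) * h21 - (B 1 - P 1) * h10 + (B 0 - P 0) * h11
  obtain ⟨hα0, hβ0⟩ := vertex_alg hα hβ hγ hδ h12 h34 H1 H3 Eq1 Eq2 Eq3 Eq4
  subst hα0 hβ0
  rw [← hc]; module

lemma vertex_H {P A B C D : Pt}
    (h12 : 0 < det2 (A - P) (B - P)) (h34 : 0 < det2 (C - P) (D - P))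
    (hsub : convexHull ℝ ({P, A, B} : Set Pt) ∩ convexHull ℝ ({P, C, D} : Set Pt) ⊆ {P}) :
    0 < det2 (A - P) (C - P) ∨ det2 (A - P) (D - P) < 0 := by
  by_contra hcon
  push_neg at hcon
  obtain ⟨hAC, hAD⟩ := hcon
  set dCD := det2 (C - P) (D - P) with hdCD
  set γ := det2 (A - P) (D - P) / dCD with hγdef
  set δ := -det2 (A - P) (C - P) / dCD with hδdef
  have hγ : 0 ≤ γ := div_nonneg hAD h34.le
  have hδ : 0 ≤ δ := div_nonneg (by linarith) h34.le
  have hCr : A - P = γ • (C - P) + δ • (D - P) := by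
    ext j
    simp only [PiLp.add_apply, PiLp.smul_apply, PiLp.sub_apply, smul_eq_mul, hγdef, hδdef,
      hdCD, det2, PiLp.sub_apply]
    have hne : det2 (C - P) (D - P) ≠ 0 := ne_of_gt h34
    simp only [det2, PiLp.sub_apply] at hne
    fin_cases j <;> simp only [Fin.zero_eta, Fin.mk_one] <;>
      rw [div_mul_eq_mul_div, div_mul_eq_mul_div, ← add_div, eq_div_iff hne] <;> ring
  set t := 1 / (1 + γ + δ) with htdef
  have hden : 0 < 1 + γ + δ := by linarith
  have ht : 0 < t := by positivity
  have ht1 : t * (γ + δ) ≤ 1 := by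
    rw [htdef]
    rw [div_mul_eq_mul_div, div_le_one hden]
    linarith
  have htle : t ≤ 1 := by
    rw [htdef, div_le_one hden]; linarith
  set y := (1 - t) • P + t • A + (0:ℝ) • B with hydef
  have hy1 : y ∈ convexHull ℝ ({P, A, B} : Set Pt) :=
    mem_hull3_iff.mpr ⟨1 - t, t, 0, by linarith, ht.le, le_refl 0, by ring, rfl⟩
  have hy2 : y ∈ convexHull ℝ ({P, C, D} : Set Pt) := by
    refine mem_hull3_iff.mpr ⟨1 - t * γ - t * δ, t * γ, t * δ, ?_, ?_, ?_, by ring, ?_⟩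
    · nlinarith
    · positivity
    · positivity
    · rw [hydef]
      have : A = P + (γ • (C - P) + δ • (D - P)) := by rw [← hCr]; module
      rw [this]; module
  have hyP : y = P := hsub ⟨hy1, hy2⟩
  have hAP : t • (A - P) = 0 := by
    have : y - P = t • (A - P) := by rw [hydef]; module
    rw [hyP] at this; rw [← this]; simp
  rcases smul_eq_zero.mp hAP with h' | h'
  · exact absurd h' (ne_of_gt ht)
  · have : A = P := by
      have := sub_eq_zero.mp h'
      exact this
    rw [this] at h12
    simp [det2] at h12



lemma continuous_eval (i : Fin N) (j : Fin 2) : Continuous fun Q : Fin N → Pt => Q i j :=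
  (EuclideanSpace.proj (𝕜 := ℝ) j).continuous.comp (continuous_apply i)

lemma ev_close (Q0 : Fin N → Pt) {δ : ℝ} (hδ : 0 < δ) :
    ∀ᶠ Q in nhds Q0, ∀ i, dist (Q i) (Q0 i) < δ := by
  rw [Filter.eventually_all]
  intro i
  exact (Metric.tendsto_nhds.mp ((continuous_apply i).tendsto Q0)) δ hδ

lemma transport_bound {σ : Finset (Fin N)} {w : Fin N → ℝ} (h0 : ∀ i ∈ σ, 0 ≤ w i)
    (h1 : ∑ i ∈ σ, w i = 1) {Q Q' : Fin N → Pt} {δ : ℝ}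
    (hδ : ∀ i, dist (Q i) (Q' i) ≤ δ) :
    dist (∑ i ∈ σ, w i • Q i) (∑ i ∈ σ, w i • Q' i) ≤ δ := by
  rw [dist_eq_norm, ← Finset.sum_sub_distrib]
  have h2 : ∀ i ∈ σ, w i • Q i - w i • Q' i = w i • (Q i - Q' i) := fun i _ => (smul_sub _ _ _).symm
  rw [Finset.sum_congr rfl h2]
  calc ‖∑ i ∈ σ, w i • (Q i - Q' i)‖ ≤ ∑ i ∈ σ, ‖w i • (Q i - Q' i)‖ := norm_sum_le _ _
    _ ≤ ∑ i ∈ σ, w i * δ := by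
        apply Finset.sum_le_sum
        intro i hi
        rw [norm_smul, Real.norm_of_nonneg (h0 i hi)]
        exact mul_le_mul_of_nonneg_left (by rw [← dist_eq_norm]; exact hδ i) (h0 i hi)
    _ = δ := by rw [← Finset.sum_mul, h1, one_mul]

lemma disjoint_compacts_dist {s t : Set Pt} (hs : IsCompact s) (ht : IsCompact t)
    (hd : s ∩ t = ∅) : ∃ d : ℝ, 0 < d ∧ ∀ y ∈ s, ∀ z ∈ t, d ≤ dist y z := by
  rcases s.eq_empty_or_nonempty with rfl | hsne
  · exact ⟨1, one_pos, by simp⟩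
  rcases t.eq_empty_or_nonempty with rfl | htne
  · exact ⟨1, one_pos, by simp⟩
  obtain ⟨y0, hy0, hmin⟩ := hs.exists_isMinOn hsne
    (Metric.continuous_infDist_pt t).continuousOn
  have hy0t : y0 ∉ t := fun h => by
    have : y0 ∈ s ∩ t := ⟨hy0, h⟩
    rw [hd] at this; exact this
  have hpos : 0 < Metric.infDist y0 t :=
    (ht.isClosed.notMem_iff_infDist_pos htne).mp hy0t
  refine ⟨Metric.infDist y0 t, hpos, fun y hy z hz => ?_⟩
  calc Metric.infDist y0 t ≤ Metric.infDist y t := hmin hy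
    _ ≤ dist y z := Metric.infDist_le_dist_of_mem hz

lemma hull_compact (Q : Fin N → Pt) (σ : Finset (Fin N)) :
    IsCompact (convexHull ℝ (Q '' ↑σ)) :=
  ((σ.finite_toSet).image Q).isCompact_convexHull ℝ

lemma hull_nonempty {Q : Fin N → Pt} {σ : Finset (Fin N)} (h : σ.Nonempty) :
    (convexHull ℝ (Q '' ↑σ)).Nonempty := by
  obtain ⟨i, hi⟩ := h
  exact ⟨Q i, subset_convexHull ℝ _ (Set.mem_image_of_mem Q hi)⟩

lemma hull_mono_idx {Q : Fin N → Pt} {σ τ : Finset (Fin N)} (h : σ ⊆ τ) :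
    convexHull ℝ (Q '' ↑σ) ⊆ convexHull ℝ (Q '' ↑τ) :=
  convexHull_mono (Set.image_mono h)

lemma affineIndependent_restrict {Q : Fin N → Pt} {a b c : Fin N}
    (hab : a ≠ b) (hac : a ≠ c) (hbc : b ≠ c)
    (h : AffineIndependent ℝ ![Q a, Q b, Q c]) (σ : Finset (Fin N))
    (hσ : σ ⊆ {a, b, c}) : AffineIndependent ℝ (fun i : σ => Q i.1) := by
  classical
  set e : σ → Fin 3 := fun i => if i.1 = a then 0 else if i.1 = b then 1 else 2 with he
  have hmem : ∀ i : σ, i.1 = a ∨ i.1 = b ∨ i.1 = c := by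
    intro i
    have := hσ i.2
    simpa [Finset.mem_insert, Finset.mem_singleton] using this
  have heinj : Function.Injective e := by
    intro i j hij
    rcases hmem i with hi | hi | hi <;> rcases hmem j with hj | hj | hj <;>
      apply Subtype.ext <;> rw [hi, hj] <;>
      first
        | rfl
        | (exfalso; rw [he] at hij; simp only [hi, hj] at hij;
           simp [hab, hac, hbc, hab.symm, hac.symm, hbc.symm, Ne.symm] at hij <;> omega)
  have hcomp : (fun i : σ => Q i.1) = (![Q a, Q b, Q c]) ∘ e := by
    funext i
    rcases hmem i with hi | hi | hi <;>
      simp [he, hi, hab, hac, hbc, Function.comp, hab.symm, hac.symm, hbc.symm]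
  rw [hcomp]
  exact h.comp_embedding ⟨e, heinj⟩

lemma affineIndependent_image {Q : Fin N → Pt} {σ : Finset (Fin N)}
    (h : AffineIndependent ℝ (fun i : σ => Q i.1)) :
    AffineIndependent ℝ ((↑) : ↥(σ.image Q) → Pt) := by
  have hr := h.range
  have heq : Set.range (fun i : σ => Q i.1) = ((σ.image Q : Finset Pt) : Set Pt) := by
    ext y
    simp [Set.range, Finset.coe_image]
  rw [heq] at hr
  exact hr



lemma det2_swap (v w : Pt) : det2 v w = -det2 w v := by simp [det2]; ring

lemma continuous_det2_QQ (a b c d : Fin N) :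
    Continuous fun Q : Fin N → Pt => det2 (Q b - Q a) (Q d - Q c) := by
  have h : (fun Q : Fin N → Pt => det2 (Q b - Q a) (Q d - Q c)) =
      fun Q => (Q b 0 - Q a 0) * (Q d 1 - Q c 1) - (Q b 1 - Q a 1) * (Q d 0 - Q c 0) := by
    funext Q; simp [det2, PiLp.sub_apply]
  rw [h]
  exact (((continuous_eval b 0).sub (continuous_eval a 0)).mul
      ((continuous_eval d 1).sub (continuous_eval c 1))).sub
    (((continuous_eval b 1).sub (continuous_eval a 1)).mul
      ((continuous_eval d 0).sub (continuous_eval c 0)))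

lemma ev_pos {F : (Fin N → Pt) → ℝ} (hF : Continuous F) {Q0 : Fin N → Pt} (h : 0 < F Q0) :
    ∀ᶠ Q in nhds Q0, 0 < F Q := by
  have := hF.continuousAt (x := Q0) (Ioi_mem_nhds h)
  exact this

lemma ev_neg {F : (Fin N → Pt) → ℝ} (hF : Continuous F) {Q0 : Fin N → Pt} (h : F Q0 < 0) :
    ∀ᶠ Q in nhds Q0, F Q < 0 := by
  have := hF.continuousAt (x := Q0) (Iio_mem_nhds h)
  exact this

lemma image_triple (Q : Fin N → Pt) (a b c : Fin N) :
    Q '' (↑({a, b, c} : Finset (Fin N))) = {Q a, Q b, Q c} := by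
  simp [Finset.coe_insert, Set.image_insert_eq]

lemma image_pair (Q : Fin N → Pt) (a b : Fin N) :
    Q '' (↑({a, b} : Finset (Fin N))) = {Q a, Q b} := by
  simp [Finset.coe_insert, Set.image_insert_eq]

lemma image_single (Q : Fin N → Pt) (a : Fin N) :
    Q '' (↑({a} : Finset (Fin N))) = {Q a} := by simp

lemma hull_inter_of_affInd {Q : Fin N → Pt} {S : Finset (Fin N)}
    (hAI : AffineIndependent ℝ (fun i : S => Q i.1))
    {σ ρ : Finset (Fin N)} (hσ : σ ⊆ S) (hρ : ρ ⊆ S) :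
    convexHull ℝ (Q '' ↑σ) ∩ convexHull ℝ (Q '' ↑ρ) = convexHull ℝ (Q '' ↑(σ ∩ ρ)) := by
  classical
  have hinj : Set.InjOn Q ↑S := by
    intro x hx y hy hxy
    have := hAI.injective (a₁ := ⟨x, hx⟩) (a₂ := ⟨y, hy⟩) hxy
    exact congrArg Subtype.val this
  have hAI' := affineIndependent_image hAI
  have h1 : (σ.image Q) ⊆ S.image Q := Finset.image_subset_image hσ
  have h2 : (ρ.image Q) ⊆ S.image Q := Finset.image_subset_image hρ
  have key := hAI'.convexHull_inter h1 h2
  have himg : (σ ∩ ρ).image Q = σ.image Q ∩ ρ.image Q := by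
    apply Finset.image_inter_of_injOn
    apply hinj.mono
    intro x hx
    simp only [Finset.coe_union, Set.mem_union, Finset.mem_coe] at hx
    rcases hx with h' | h'
    · exact hσ h'
    · exact hρ h'
  rw [← Finset.coe_image, ← Finset.coe_image, ← Finset.coe_image, himg, Finset.coe_inter]
  exact key.symm

lemma sa_formula (Q : Fin N → Pt) (o : Fin 3 → Fin N) :
    det2 (Q (o 1) - Q (o 0)) (Q (o 2) - Q (o 0)) = 2 * signedArea Q o := by
  simp only [signedArea, det2, PiLp.sub_apply]; ring

lemma orient_data {Δ : OrientedComplex N} {S : Finset (Fin N)} (hS : S ∈ Δ.faces)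
    (h3 : S.card = 3) :
    S = {Δ.orient S 0, Δ.orient S 1, Δ.orient S 2} ∧ Function.Injective (Δ.orient S) := by
  classical
  have hspec := Δ.orient_spec S hS h3
  have huniv : (Finset.univ : Finset (Fin 3)) = {0, 1, 2} := by decide
  have himg : Finset.image (Δ.orient S) Finset.univ =
      {Δ.orient S 0, Δ.orient S 1, Δ.orient S 2} := by
    rw [huniv, Finset.image_insert, Finset.image_insert, Finset.image_singleton]
  refine ⟨hspec.symm.trans himg, ?_⟩
  have hcard : (Finset.image (Δ.orient S) Finset.univ).card = 3 := by rw [hspec]; exact h3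
  have hinjOn : Set.InjOn (Δ.orient S) ↑(Finset.univ : Finset (Fin 3)) := by
    rw [← Finset.card_image_iff]
    rw [hcard, Finset.card_univ]; rfl
  intro x y hxy
  exact hinjOn (by simp) (by simp) hxy

lemma sa_f1 (Q : Fin N → Pt) (o : Fin 3 → Fin N) :
    det2 (Q (o 2) - Q (o 1)) (Q (o 0) - Q (o 1)) = 2 * signedArea Q o := by
  simp only [signedArea, det2, PiLp.sub_apply]; ring

lemma sa_f2 (Q : Fin N → Pt) (o : Fin 3 → Fin N) :
    det2 (Q (o 0) - Q (o 2)) (Q (o 1) - Q (o 2)) = 2 * signedArea Q o := by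
  simp only [signedArea, det2, PiLp.sub_apply]; ring

lemma perm1 (o : Fin 3 → Fin N) :
    ({o 1, o 2, o 0} : Finset (Fin N)) = {o 0, o 1, o 2} := by
  ext x; simp; tauto

lemma perm2 (o : Fin 3 → Fin N) :
    ({o 2, o 0, o 1} : Finset (Fin N)) = {o 0, o 1, o 2} := by
  ext x; simp; tauto

lemma edge_pick {o : Fin 3 → Fin N} {a b : Fin N} (h : (a, b) ∈ inducedEdges o) :
    ∃ c, ({a, b, c} : Finset (Fin N)) = {o 0, o 1, o 2} ∧
      ∀ Q : Fin N → Pt, det2 (Q b - Q a) (Q c - Q a) = 2 * signedArea Q o := by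
  classical
  simp only [inducedEdges, Finset.mem_insert, Finset.mem_singleton, Prod.mk.injEq] at h
  rcases h with ⟨rfl, rfl⟩ | ⟨rfl, rfl⟩ | ⟨rfl, rfl⟩
  · exact ⟨o 0, by ext x; simp; try tauto
      ,
      fun Q => by simp only [signedArea, det2, PiLp.sub_apply]; ring⟩
  · exact ⟨o 1, by ext x; simp; try tauto
      ,
      fun Q => by simp only [signedArea, det2, PiLp.sub_apply]; ring⟩
  · exact ⟨o 2, by ext x; simp; try tauto
      ,
      fun Q => by simp only [signedArea, det2, PiLp.sub_apply]; ring⟩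

lemma pair_in_edges {o : Fin 3 → Fin N} {a b : Fin N}
    (ha : a ∈ ({o 0, o 1, o 2} : Finset (Fin N))) (hb : b ∈ ({o 0, o 1, o 2} : Finset (Fin N)))
    (hab : a ≠ b) : (a, b) ∈ inducedEdges o ∨ (b, a) ∈ inducedEdges o := by
  classical
  simp only [Finset.mem_insert, Finset.mem_singleton] at ha hb
  rcases ha with rfl | rfl | rfl <;> rcases hb with rfl | rfl | rfl <;>
    first
      | exact absurd rfl hab
      | (left; simp only [inducedEdges, Finset.mem_insert, Finset.mem_singleton,
            Prod.mk.injEq]; tauto)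
      | (right; simp only [inducedEdges, Finset.mem_insert, Finset.mem_singleton,
            Prod.mk.injEq]; tauto)

end Aux


section Stability

lemma det2_flip (A B D : Pt) : det2 (B - A) (D - A) = -det2 (A - B) (D - B) := by
  simp only [det2, PiLp.sub_apply]; ring

lemma vertex_pick {o : Fin 3 → Fin N} {S : Finset (Fin N)} (hSeq : S = {o 0, o 1, o 2}) {v : Fin N}
    (hv : v ∈ S) :
    ∃ a b, S = {v, a, b} ∧
      ∀ Q : Fin N → Pt, det2 (Q a - Q v) (Q b - Q v) = 2 * signedArea Q o := by
  have hv' : v = o 0 ∨ v = o 1 ∨ v = o 2 := by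
    rw [hSeq] at hv
    simpa using hv
  rcases hv' with rfl | rfl | rfl
  · exact ⟨o 1, o 2, hSeq, fun Q => sa_formula Q o⟩
  · exact ⟨o 2, o 0, hSeq.trans (perm1 o).symm, fun Q => sa_f1 Q o⟩
  · exact ⟨o 0, o 1, hSeq.trans (perm2 o).symm, fun Q => sa_f2 Q o⟩

lemma E3_pair_one (Q0 : Fin N → Pt) {A B : Finset (Fin N)} (hB : B.Nonempty)
    {x : Pt} (hxA : x ∈ convexHull ℝ (Q0 '' ↑A)) (hxB : x ∉ convexHull ℝ (Q0 '' ↑B)) :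
    ∀ᶠ Q in nhds Q0, convexHull ℝ (Q '' ↑A) ≠ convexHull ℝ (Q '' ↑B) := by
  have hK : IsClosed (convexHull ℝ (Q0 '' ↑B)) := (hull_compact Q0 B).isClosed
  have hKne : (convexHull ℝ (Q0 '' ↑B)).Nonempty := hull_nonempty hB
  have hd : 0 < Metric.infDist x (convexHull ℝ (Q0 '' ↑B)) :=
    (hK.notMem_iff_infDist_pos hKne).mp hxB
  set d := Metric.infDist x (convexHull ℝ (Q0 '' ↑B)) with hddef
  filter_upwards [ev_close Q0 (show (0:ℝ) < d/3 by linarith)] with Q hQ heq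
  obtain ⟨w, hw0, hw1, hwc⟩ := (mem_hull_finset_iff Q0 A x).mp hxA
  have hx' : (∑ i ∈ A, w i • Q i) ∈ convexHull ℝ (Q '' ↑A) :=
    (mem_hull_finset_iff Q A _).mpr ⟨w, hw0, hw1, rfl⟩
  rw [heq] at hx'
  obtain ⟨v, hv0, hv1, hvc⟩ := (mem_hull_finset_iff Q B _).mp hx'
  have hy : (∑ i ∈ B, v i • Q0 i) ∈ convexHull ℝ (Q0 '' ↑B) :=
    (mem_hull_finset_iff Q0 B _).mpr ⟨v, hv0, hv1, rfl⟩
  have hd1 : dist x (∑ i ∈ A, w i • Q i) ≤ d/3 := by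
    rw [← hwc]
    exact transport_bound hw0 hw1 (fun i => by rw [dist_comm]; exact (hQ i).le)
  have hd2 : dist (∑ i ∈ B, v i • Q i) (∑ i ∈ B, v i • Q0 i) ≤ d/3 :=
    transport_bound hv0 hv1 (fun i => (hQ i).le)
  have hcontr : d ≤ dist x (∑ i ∈ B, v i • Q0 i) := Metric.infDist_le_dist_of_mem hy
  have htri : dist x (∑ i ∈ B, v i • Q0 i) ≤
      dist x (∑ i ∈ A, w i • Q i) + dist (∑ i ∈ B, v i • Q i) (∑ i ∈ B, v i • Q0 i) := by
    rw [← hvc]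
    exact dist_triangle _ _ _
  linarith

lemma E3_pair (Q0 : Fin N → Pt) {A B : Finset (Fin N)} (hA : A.Nonempty) (hB : B.Nonempty)
    (hne : convexHull ℝ (Q0 '' ↑A) ≠ convexHull ℝ (Q0 '' ↑B)) :
    ∀ᶠ Q in nhds Q0, convexHull ℝ (Q '' ↑A) ≠ convexHull ℝ (Q '' ↑B) := by
  by_cases hsub : convexHull ℝ (Q0 '' ↑A) ⊆ convexHull ℝ (Q0 '' ↑B)
  · have hnsub : ¬ convexHull ℝ (Q0 '' ↑B) ⊆ convexHull ℝ (Q0 '' ↑A) :=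
      fun h => hne (Set.Subset.antisymm hsub h)
    obtain ⟨x, hxB, hxA⟩ := Set.not_subset.mp hnsub
    exact (E3_pair_one Q0 hA hxB hxA).mono fun Q h h' => h h'.symm
  · obtain ⟨x, hxA, hxB⟩ := Set.not_subset.mp hsub
    exact E3_pair_one Q0 hB hxA hxB

lemma edge_branch (Q0 : Fin N → Pt)
    (hpos0 : ∀ S ∈ Δ.faces, S.card = 3 → 0 < signedArea Q0 (Δ.orient S))
    {S T : Finset (Fin N)} {a b : Fin N}
    (hS : S ∈ Δ.faces) (hT : T ∈ Δ.faces) (h3S : S.card = 3) (h3T : T.card = 3)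
    (hSeq : S = {Δ.orient S 0, Δ.orient S 1, Δ.orient S 2})
    (hTeq : T = {Δ.orient T 0, Δ.orient T 1, Δ.orient T 2})
    (h1 : (a, b) ∈ inducedEdges (Δ.orient S)) (h2 : (b, a) ∈ inducedEdges (Δ.orient T))
    (hcap : S ∩ T = {a, b}) :
    ∀ᶠ Q in nhds Q0, convexHull ℝ (Q '' ↑S) ∩ convexHull ℝ (Q '' ↑T)
      = convexHull ℝ (Q '' ↑(S ∩ T)) := by
  obtain ⟨c, hc, hdetS⟩ := edge_pick h1
  obtain ⟨d, hd, hdetT⟩ := edge_pick h2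
  have hSabc : S = {a, b, c} := by rw [hSeq, ← hc]
  have hTbad : T = {b, a, d} := by rw [hTeq, ← hd]
  have hposS : 0 < det2 (Q0 b - Q0 a) (Q0 c - Q0 a) := by
    rw [hdetS Q0]
    have := hpos0 S hS h3S; linarith
  have hnegT : det2 (Q0 b - Q0 a) (Q0 d - Q0 a) < 0 := by
    rw [det2_flip (Q0 a) (Q0 b) (Q0 d)]
    have h := hdetT Q0
    have := hpos0 T hT h3T
    rw [h]; linarith
  filter_upwards [ev_pos (continuous_det2_QQ a b a c) hposS,
    ev_neg (continuous_det2_QQ a b a d) hnegT] with Q hC hD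
  have himS : Q '' ↑S = {Q a, Q b, Q c} := by rw [hSabc]; exact image_triple Q a b c
  have himT : Q '' ↑T = ({Q a, Q b, Q d} : Set Pt) := by
    rw [hTbad, image_triple Q b a d, Set.insert_comm]
  have himR : Q '' ↑(S ∩ T) = {Q a, Q b} := by rw [hcap]; exact image_pair Q a b
  apply Set.Subset.antisymm
  · rintro x ⟨hx1, hx2⟩
    rw [himS] at hx1; rw [himT] at hx2
    rw [himR]
    exact edge_core hC hD hx1 hx2
  · exact Set.subset_inter (hull_mono_idx Finset.inter_subset_left)
      (hull_mono_idx Finset.inter_subset_right)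

lemma E2_pair (Q0 : Fin N → Pt) (hQ0 : Q0 ∈ Mplus Δ) {S T : Finset (Fin N)}
    (hS : S ∈ Δ.faces) (hT : T ∈ Δ.faces) (h3S : S.card = 3) (h3T : T.card = 3) :
    ∀ᶠ Q in nhds Q0, convexHull ℝ (Q '' ↑S) ∩ convexHull ℝ (Q '' ↑T)
      = convexHull ℝ (Q '' ↑(S ∩ T)) := by
  classical
  obtain ⟨⟨hind0, hdown0, hint0, habs0⟩, hpos0⟩ := hQ0
  by_cases hST : S = T
  · subst hST
    exact Filter.Eventually.of_forall fun Q => by rw [Finset.inter_self, Set.inter_self]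
  have hm3 : (S ∩ T).card ≠ 3 := by
    intro h
    have h1 : S ∩ T = S := Finset.eq_of_subset_of_card_le Finset.inter_subset_left (by omega)
    have h2 : S ∩ T = T := Finset.eq_of_subset_of_card_le Finset.inter_subset_right (by omega)
    exact hST (h1.symm.trans h2)
  have hcard : (S ∩ T).card ≤ 3 :=
    le_trans (Finset.card_le_card Finset.inter_subset_left) (le_of_eq h3S)
  have hcases : (S ∩ T).card = 0 ∨ (S ∩ T).card = 1 ∨ (S ∩ T).card = 2 := by omega
  rcases hcases with h0 | h1 | h2
  · -- disjoint vertex sets: hulls disjoint at Q0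
    have hcap : S ∩ T = ∅ := Finset.card_eq_zero.mp h0
    have hdisj : convexHull ℝ (Q0 '' ↑S) ∩ convexHull ℝ (Q0 '' ↑T) = ∅ := by
      by_contra hne
      obtain ⟨ρ, hρne, hρS, hρT, -⟩ :=
        hint0 S hS T hT (Set.nonempty_iff_ne_empty.mpr hne)
      have : ρ ⊆ S ∩ T := Finset.subset_inter hρS hρT
      rw [hcap] at this
      obtain ⟨i, hi⟩ := hρne
      exact absurd (this hi) (Finset.notMem_empty i)
    obtain ⟨dd, hdd, hbound⟩ := disjoint_compacts_dist (hull_compact Q0 S) (hull_compact Q0 T) hdisj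
    filter_upwards [ev_close Q0 (show (0:ℝ) < dd/3 by linarith)] with Q hQ
    rw [hcap]
    simp only [Finset.coe_empty, Set.image_empty, convexHull_empty]
    rw [Set.eq_empty_iff_forall_notMem]
    rintro x ⟨hx1, hx2⟩
    obtain ⟨w, hw0, hw1, hwc⟩ := (mem_hull_finset_iff Q S x).mp hx1
    obtain ⟨v, hv0, hv1, hvc⟩ := (mem_hull_finset_iff Q T x).mp hx2
    have hy1 : (∑ i ∈ S, w i • Q0 i) ∈ convexHull ℝ (Q0 '' ↑S) :=
      (mem_hull_finset_iff Q0 S _).mpr ⟨w, hw0, hw1, rfl⟩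
    have hy2 : (∑ i ∈ T, v i • Q0 i) ∈ convexHull ℝ (Q0 '' ↑T) :=
      (mem_hull_finset_iff Q0 T _).mpr ⟨v, hv0, hv1, rfl⟩
    have hb1 : dist (∑ i ∈ S, w i • Q i) (∑ i ∈ S, w i • Q0 i) ≤ dd/3 :=
      transport_bound hw0 hw1 (fun i => (hQ i).le)
    have hb2 : dist (∑ i ∈ T, v i • Q i) (∑ i ∈ T, v i • Q0 i) ≤ dd/3 :=
      transport_bound hv0 hv1 (fun i => (hQ i).le)
    have hdist := hbound _ hy1 _ hy2
    have htri : dist (∑ i ∈ S, w i • Q0 i) (∑ i ∈ T, v i • Q0 i) ≤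
        dist (∑ i ∈ S, w i • Q0 i) x + dist x (∑ i ∈ T, v i • Q0 i) := dist_triangle _ _ _
    rw [hwc] at hb1
    rw [hvc] at hb2
    rw [dist_comm] at hb1
    linarith [hb1, hb2, htri, hdist]
  · -- single shared vertex
    obtain ⟨vv, hcap⟩ := Finset.card_eq_one.mp h1
    have hvS : vv ∈ S := Finset.inter_subset_left (hcap ▸ Finset.mem_singleton_self vv)
    have hvT : vv ∈ T := Finset.inter_subset_right (hcap ▸ Finset.mem_singleton_self vv)
    obtain ⟨hSeq, hSinj⟩ := orient_data hS h3S
    obtain ⟨hTeq, hTinj⟩ := orient_data hT h3T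
    obtain ⟨a, b, hSab, hdetS⟩ := vertex_pick hSeq hvS
    obtain ⟨c, d, hTcd, hdetT⟩ := vertex_pick hTeq hvT
    have h12 : 0 < det2 (Q0 a - Q0 vv) (Q0 b - Q0 vv) := by
      rw [hdetS Q0]; have := hpos0 S hS h3S; linarith
    have h34 : 0 < det2 (Q0 c - Q0 vv) (Q0 d - Q0 vv) := by
      rw [hdetT Q0]; have := hpos0 T hT h3T; linarith
    have himS0 : Q0 '' ↑S = {Q0 vv, Q0 a, Q0 b} := by rw [hSab]; exact image_triple Q0 vv a b
    have himT0 : Q0 '' ↑T = {Q0 vv, Q0 c, Q0 d} := by rw [hTcd]; exact image_triple Q0 vv c d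
    have hsub0 : convexHull ℝ ({Q0 vv, Q0 a, Q0 b} : Set Pt)
        ∩ convexHull ℝ ({Q0 vv, Q0 c, Q0 d} : Set Pt) ⊆ {Q0 vv} := by
      rw [← himS0, ← himT0]
      intro x hx
      obtain ⟨ρ, hρne, hρS, hρT, hρeq⟩ := hint0 S hS T hT ⟨x, hx⟩
      have hρsub : ρ ⊆ {vv} := hcap ▸ Finset.subset_inter hρS hρT
      have hρv : ρ = {vv} := by
        rcases Finset.subset_singleton_iff.mp hρsub with h | h
        · exact absurd h (Finset.nonempty_iff_ne_empty.mp hρne)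
        · exact h
      rw [hρeq, hρv, image_single, convexHull_singleton] at hx
      exact hx
    have H1 := vertex_H h12 h34 hsub0
    have H3' := vertex_H h34 h12 (by rw [Set.inter_comm]; exact hsub0)
    have H3 : det2 (Q0 a - Q0 vv) (Q0 c - Q0 vv) < 0 ∨
        det2 (Q0 c - Q0 vv) (Q0 b - Q0 vv) < 0 := by
      rcases H3' with h | h
      · left
        have := det2_swap (Q0 c - Q0 vv) (Q0 a - Q0 vv)
        linarith
      · right; exact h
    have hevH1 : ∀ᶠ Q in nhds Q0, (0 < det2 (Q a - Q vv) (Q c - Q vv) ∨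
        det2 (Q a - Q vv) (Q d - Q vv) < 0) := by
      rcases H1 with h | h
      · exact (ev_pos (continuous_det2_QQ vv a vv c) h).mono fun Q hq => Or.inl hq
      · exact (ev_neg (continuous_det2_QQ vv a vv d) h).mono fun Q hq => Or.inr hq
    have hevH3 : ∀ᶠ Q in nhds Q0, (det2 (Q a - Q vv) (Q c - Q vv) < 0 ∨
        det2 (Q c - Q vv) (Q b - Q vv) < 0) := by
      rcases H3 with h | h
      · exact (ev_neg (continuous_det2_QQ vv a vv c) h).mono fun Q hq => Or.inl hq
      · exact (ev_neg (continuous_det2_QQ vv c vv b) h).mono fun Q hq => Or.inr hq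
    filter_upwards [ev_pos (continuous_det2_QQ vv a vv b) h12,
      ev_pos (continuous_det2_QQ vv c vv d) h34, hevH1, hevH3] with Q k12 k34 kH1 kH3
    have himS : Q '' ↑S = {Q vv, Q a, Q b} := by rw [hSab]; exact image_triple Q vv a b
    have himT : Q '' ↑T = {Q vv, Q c, Q d} := by rw [hTcd]; exact image_triple Q vv c d
    have himR : Q '' ↑(S ∩ T) = {Q vv} := by rw [hcap]; exact image_single Q vv
    apply Set.Subset.antisymm
    · rintro x ⟨hx1, hx2⟩
      rw [himS] at hx1; rw [himT] at hx2
      have := vertex_core k12 k34 kH1 kH3 hx1 hx2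
      rw [himR, convexHull_singleton, this]
      exact rfl
    · exact Set.subset_inter (hull_mono_idx Finset.inter_subset_left)
        (hull_mono_idx Finset.inter_subset_right)
  · -- shared edge
    obtain ⟨a, b, hab, hcap⟩ := Finset.card_eq_two.mp h2
    have hcons := Δ.consistent S hS T hT h3S h3T hST (by rw [hcap]; exact h2 ▸ (by rw [hcap]))
    have haST : a ∈ S ∩ T := by rw [hcap]; simp
    have hbST : b ∈ S ∩ T := by rw [hcap]; simp
    obtain ⟨hSeq, hSinj⟩ := orient_data hS h3S
    obtain ⟨hTeq, hTinj⟩ := orient_data hT h3T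
    have haS : a ∈ ({Δ.orient S 0, Δ.orient S 1, Δ.orient S 2} : Finset (Fin N)) := by
      rw [← hSeq]; exact Finset.inter_subset_left haST
    have hbS : b ∈ ({Δ.orient S 0, Δ.orient S 1, Δ.orient S 2} : Finset (Fin N)) := by
      rw [← hSeq]; exact Finset.inter_subset_left hbST
    rcases pair_in_edges haS hbS hab with h1' | h1'
    · have h2' : (b, a) ∈ inducedEdges (Δ.orient T) := (hcons a b haST hbST hab).mp h1'
      exact edge_branch Δ Q0 hpos0 hS hT h3S h3T hSeq hTeq h1' h2' hcap
    · have h2' : (a, b) ∈ inducedEdges (Δ.orient T) := (hcons b a hbST haST hab.symm).mp h1'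
      have hcap' : T ∩ S = {a, b} := by
        rw [Finset.inter_comm]; exact hcap
      have := edge_branch Δ Q0 hpos0 hT hS h3T h3S hTeq hSeq h2' h1' hcap'
      exact this.mono fun Q h => by
        rw [Set.inter_comm, Finset.inter_comm]; exact h

end Stability

/-- `M⁺_Δ` is an open subset of `ℝ^{2×N_V}`. -/
theorem stmt4 {N : ℕ} (hN : 3 ≤ N) (Δ : OrientedComplex N) :
    IsOpen (Mplus Δ) := by
  classical
  rw [isOpen_iff_mem_nhds]
  intro Q0 hQ0
  obtain ⟨⟨hind0, hdown0, hint0, habs0⟩, hpos0⟩ := hQ0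
  have hQ0' : Q0 ∈ Mplus Δ := ⟨⟨hind0, hdown0, hint0, habs0⟩, hpos0⟩
  -- positivity of all signed areas is stable
  have hE1 : ∀ᶠ Q in nhds Q0, ∀ S : Finset (Fin N),
      S ∈ Δ.faces → S.card = 3 → 0 < signedArea Q (Δ.orient S) := by
    rw [Filter.eventually_all]
    intro S
    by_cases hS : S ∈ Δ.faces ∧ S.card = 3
    · obtain ⟨hSf, h3⟩ := hS
      have hcont : Continuous fun Q : Fin N → Pt => signedArea Q (Δ.orient S) := by
        have heq : (fun Q : Fin N → Pt => signedArea Q (Δ.orient S)) =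
            fun Q => det2 (Q (Δ.orient S 1) - Q (Δ.orient S 0))
              (Q (Δ.orient S 2) - Q (Δ.orient S 1)) / 2 := rfl
        rw [heq]
        exact (continuous_det2_QQ _ _ _ _).div_const 2
      exact (ev_pos hcont (hpos0 S hSf h3)).mono fun Q h _ _ => h
    · exact Filter.Eventually.of_forall fun Q h1 h2 => absurd ⟨h1, h2⟩ hS
  -- intersections of 2-faces are stable
  have hE2 : ∀ᶠ Q in nhds Q0, ∀ S T : Finset (Fin N),
      S ∈ Δ.faces → T ∈ Δ.faces → S.card = 3 → T.card = 3 →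
      convexHull ℝ (Q '' ↑S) ∩ convexHull ℝ (Q '' ↑T) = convexHull ℝ (Q '' ↑(S ∩ T)) := by
    rw [Filter.eventually_all]
    intro S
    rw [Filter.eventually_all]
    intro T
    by_cases hST : S ∈ Δ.faces ∧ T ∈ Δ.faces ∧ S.card = 3 ∧ T.card = 3
    · obtain ⟨h1, h2, h3, h4⟩ := hST
      exact (E2_pair Δ Q0 hQ0' h1 h2 h3 h4).mono fun Q h _ _ _ _ => h
    · exact Filter.Eventually.of_forall fun Q ha hb hc hd => absurd ⟨ha, hb, hc, hd⟩ hST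
  -- non-faces never have the hull of a face
  have hE3 : ∀ᶠ Q in nhds Q0, ∀ σ τ : Finset (Fin N),
      σ.Nonempty → σ ∉ Δ.faces → τ ∈ Δ.faces →
      convexHull ℝ (Q '' ↑σ) ≠ convexHull ℝ (Q '' ↑τ) := by
    rw [Filter.eventually_all]
    intro σ
    rw [Filter.eventually_all]
    intro τ
    by_cases hστ : σ.Nonempty ∧ σ ∉ Δ.faces ∧ τ ∈ Δ.faces
    · obtain ⟨hσne, hσf, hτf⟩ := hστ
      have hne0 : convexHull ℝ (Q0 '' ↑σ) ≠ convexHull ℝ (Q0 '' ↑τ) := by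
        intro heq
        exact hσf (habs0 σ hσne ⟨τ, hτf, heq⟩)
      exact (E3_pair Q0 hσne (Δ.mem_nonempty τ hτf) hne0).mono fun Q h _ _ _ => h
    · exact Filter.Eventually.of_forall fun Q ha hb hc => absurd ⟨ha, hb, hc⟩ hστ
  filter_upwards [hE1, hE2, hE3] with Q hQ1 hQ2 hQ3
  -- affine independence of any subset of a 2-face
  have hAI_of : ∀ σ S : Finset (Fin N), S ∈ Δ.faces → S.card = 3 → σ ⊆ S →
      AffineIndependent ℝ fun i : σ => Q i.1 := by
    intro σ S hSf h3S hσS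
    obtain ⟨hSeq, hSinj⟩ := orient_data hSf h3S
    have hdet : det2 (Q (Δ.orient S 1) - Q (Δ.orient S 0))
        (Q (Δ.orient S 2) - Q (Δ.orient S 0)) ≠ 0 := by
      rw [sa_formula]
      have := hQ1 S hSf h3S
      linarith
    have hAI : AffineIndependent ℝ fun k : Fin 3 => Q (Δ.orient S k) :=
      affineIndependent_of_det2 hdet
    have hconv : (fun k : Fin 3 => Q (Δ.orient S k)) =
        ![Q (Δ.orient S 0), Q (Δ.orient S 1), Q (Δ.orient S 2)] := by
      funext k; fin_cases k <;> rfl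
    rw [hconv] at hAI
    have h01 : Δ.orient S 0 ≠ Δ.orient S 1 := fun h => absurd (hSinj h) (by decide)
    have h02 : Δ.orient S 0 ≠ Δ.orient S 2 := fun h => absurd (hSinj h) (by decide)
    have h12 : Δ.orient S 1 ≠ Δ.orient S 2 := fun h => absurd (hSinj h) (by decide)
    exact affineIndependent_restrict h01 h02 h12 hAI σ (hSeq ▸ hσS)
  refine ⟨⟨?_, ?_, ?_, ?_⟩, fun S hS h3 => hQ1 S hS h3⟩
  · -- condition 1
    intro σ hσ
    obtain ⟨S, hSf, h3S, hσS⟩ := Δ.pure σ hσ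
    exact hAI_of σ S hSf h3S hσS
  · -- condition 2
    intro σ hσ ρ hρσ hρne
    exact ⟨ρ, Δ.down_closed σ hσ ρ hρσ hρne, rfl⟩
  · -- condition 3
    intro σ hσ τ hτ hne
    obtain ⟨S, hSf, h3S, hσS⟩ := Δ.pure σ hσ
    obtain ⟨T, hTf, h3T, hτT⟩ := Δ.pure τ hτ
    have hAIS : AffineIndependent ℝ fun i : S => Q i.1 :=
      hAI_of S S hSf h3S (subset_refl S)
    have hAIT : AffineIndependent ℝ fun i : T => Q i.1 :=
      hAI_of T T hTf h3T (subset_refl T)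
    have h2 : convexHull ℝ (Q '' ↑S) ∩ convexHull ℝ (Q '' ↑T)
        = convexHull ℝ (Q '' ↑(S ∩ T)) := hQ2 S T hSf hTf h3S h3T
    have hX1 : convexHull ℝ (Q '' ↑σ) ∩ convexHull ℝ (Q '' ↑τ)
        ⊆ convexHull ℝ (Q '' ↑(S ∩ T)) := by
      intro x hx
      rw [← h2]
      exact ⟨hull_mono_idx hσS hx.1, hull_mono_idx hτT hx.2⟩
    have hEq1 : convexHull ℝ (Q '' ↑σ) ∩ convexHull ℝ (Q '' ↑(S ∩ T))
        = convexHull ℝ (Q '' ↑(σ ∩ (S ∩ T))) :=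
      hull_inter_of_affInd hAIS hσS Finset.inter_subset_left
    have hEq2 : convexHull ℝ (Q '' ↑τ) ∩ convexHull ℝ (Q '' ↑(S ∩ T))
        = convexHull ℝ (Q '' ↑(τ ∩ (S ∩ T))) :=
      hull_inter_of_affInd hAIT hτT Finset.inter_subset_right
    have hEq3 : convexHull ℝ (Q '' ↑(σ ∩ (S ∩ T))) ∩ convexHull ℝ (Q '' ↑(τ ∩ (S ∩ T)))
        = convexHull ℝ (Q '' ↑((σ ∩ (S ∩ T)) ∩ (τ ∩ (S ∩ T)))) :=
      hull_inter_of_affInd hAIS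
        (Finset.inter_subset_left.trans hσS)
        (Finset.inter_subset_right.trans Finset.inter_subset_left)
    have hidx : (σ ∩ (S ∩ T)) ∩ (τ ∩ (S ∩ T)) = σ ∩ τ := by
      ext i
      simp only [Finset.mem_inter]
      constructor
      · rintro ⟨⟨h1, -⟩, h2, -⟩
        exact ⟨h1, h2⟩
      · rintro ⟨h1, h2⟩
        exact ⟨⟨h1, hσS h1, hτT h2⟩, h2, hσS h1, hτT h2⟩
    have hfinal : convexHull ℝ (Q '' ↑σ) ∩ convexHull ℝ (Q '' ↑τ)
        = convexHull ℝ (Q '' ↑(σ ∩ τ)) := by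
      rw [← hidx, ← hEq3]
      apply Set.Subset.antisymm
      · intro x hx
        have hxR := hX1 hx
        constructor
        · rw [← hEq1]; exact ⟨hx.1, hxR⟩
        · rw [← hEq2]; exact ⟨hx.2, hxR⟩
      · rintro x ⟨hx1, hx2⟩
        rw [← hEq1] at hx1
        rw [← hEq2] at hx2
        exact ⟨hx1.1, hx2.1⟩
    have hρne : (σ ∩ τ).Nonempty := by
      rcases Finset.eq_empty_or_nonempty (σ ∩ τ) with h | h
      · exfalso
        obtain ⟨x, hx⟩ := hne
        rw [hfinal, h] at hx
        simp only [Finset.coe_empty, Set.image_empty, convexHull_empty] at hx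
        exact hx
      · exact h
    exact ⟨σ ∩ τ, hρne, Finset.inter_subset_left, Finset.inter_subset_right, hfinal⟩
  · -- condition 4
    intro σ hσne hmem
    obtain ⟨τ, hτ, heq⟩ := hmem
    by_cases hσf : σ ∈ Δ.faces
    · exact hσf
    · exact absurd heq (hQ3 σ τ hσne hσf hτ)

end PlanarMesh
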